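/- For the Lag system R_left with rules blank·blank → blank, blank·L → l, L·blank → blank (acting on control coordinates), any string over Σ × {blank, L, l} containing exactly one pair with control symbol L and all others blank, of length n ≥ 3, with the L-pair not in the first or last position: every iteration is defined (some rule always matches) for the first n−1 iterations, and after them the string contains exactly one non-blank control symbol, which is l. -/

import Mathlib

namespace Stmt18

/-- Control symbols: blank, initiating token `L`, terminating token `l`. -/
inductive Ctl | blank | L | l
deriving DecidableEq

/-- The rule set `R_left`, acting on control coordinates:
`blank·blank → blank`, `blank·L → l`, `L·blank → blank`. -/
def rc : Ctl → Ctl → Option Ctl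
  | .blank, .blank => some .blank
  | .blank, .L => some .l
  | .L, .blank => some .blank
  | _, _ => none

/-- One Lag iteration with context length 2. -/
def step {α : Type*} (r : Ctl → Ctl → Option Ctl) :
    List (α × Ctl) → Option (List (α × Ctl))
  | (x, a) :: (y, b) :: rest => (r a b).map fun c => (y, b) :: rest ++ [(x, c)]
  | _ => none

/-- `k` iterations of the Lag system. -/
def iterL {α : Type*} (r : Ctl → Ctl → Option Ctl) :
    ℕ → List (α × Ctl) → Option (List (α × Ctl))
  | 0, s => some s
  | k + 1, s => (step r s).bind (iterL r k)

end Stmt18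

/-!
The rules never read the data symbols, so it suffices to follow the control word
`blank^i L blank^(n-i-1)`. The first `i - 1` steps apply `blank·blank → blank` and merely rotate
blanks to the back; then `blank·L → l` appends the `l`, and `L·blank → blank` removes the `L`.
The remaining `n - i - 2` steps again only rotate blanks (at least `i + 1 ≥ 2` of them stand
before the `l`), leaving `blank^i l blank^(n-i-1)`.
-/

namespace List

theorem eq_replicate_append_cons_replicate {β : Type*} (l : List β) (x y : β) (i : ℕ)
    (hi : i < l.length) (h : ∀ j < l.length, l[j]? = some (if j = i then x else y)) :
    l = replicate i y ++ x :: replicate (l.length - i - 1) y := by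
  refine ext_getElem? fun j => ?_
  rcases lt_or_ge j l.length with hj | hj
  · rw [h j hj]
    rcases lt_trichotomy j i with hji | rfl | hji
    · simp [getElem?_append_left, hji, hji.ne]
    · simp
    · rw [if_neg hji.ne', getElem?_append_right (by simp; omega), length_replicate,
        getElem?_cons, if_neg (by omega), getElem?_replicate, if_pos (by omega)]
  · rw [getElem?_eq_none hj, getElem?_eq_none (by simp; omega)]

end List

namespace Stmt18

section Control

variable (r : Ctl → Ctl → Option Ctl)

def ctlStep : List Ctl → Option (List Ctl)
  | a :: b :: rest => (r a b).map fun c => b :: rest ++ [c]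
  | _ => none

def ctlIter : ℕ → List Ctl → Option (List Ctl)
  | 0, u => some u
  | k + 1, u => (ctlStep r u).bind (ctlIter k)

theorem step_map_snd {α : Type*} (s : List (α × Ctl)) :
    (step r s).map (List.map Prod.snd) = ctlStep r (s.map Prod.snd) := by
  match s with
  | [] | [_] => rfl
  | (x, a) :: (y, b) :: rest =>
    simp only [step, ctlStep, List.map_cons]
    cases r a b <;> simp

theorem iterL_map_snd {α : Type*} (k : ℕ) (s : List (α × Ctl)) :
    (iterL r k s).map (List.map Prod.snd) = ctlIter r k (s.map Prod.snd) := by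
  induction k generalizing s with
  | zero => rfl
  | succ k ih =>
    rw [iterL, ctlIter, ← step_map_snd]
    cases step r s <;> simp [ih]

theorem ctlIter_add (j k : ℕ) (u : List Ctl) :
    ctlIter r (j + k) u = (ctlIter r j u).bind (ctlIter r k) := by
  induction j generalizing u with
  | zero => simp [ctlIter]
  | succ j ih =>
    rw [Nat.succ_add, ctlIter, ctlIter]
    cases ctlStep r u <;> simp [ih]

end Control

open List

theorem ctlIter_rc_replicate_blank (k : ℕ) (u : List Ctl) :
    ctlIter rc k (replicate (k + 1) .blank ++ u) = some (.blank :: u ++ replicate k .blank) := by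
  induction k generalizing u with
  | zero => simp [ctlIter]
  | succ k ih =>
    have hstep : ctlStep rc (replicate (k + 2) .blank ++ u) =
        some (replicate (k + 1) .blank ++ (u ++ [.blank])) := by
      simp [replicate_succ, ctlStep, rc]
    rw [ctlIter, hstep, Option.bind_some, ih]
    simp [replicate_succ]

theorem ctlIter_rc_single_L (a m : ℕ) :
    ctlIter rc (a + 2 + m) (replicate (a + 1) .blank ++ .L :: replicate (m + 1) .blank) =
      some (replicate (a + 1) .blank ++ .l :: replicate (m + 1) .blank) := by
  have hLl : ctlIter rc 2 (.blank :: .L :: replicate (m + 1) .blank ++ replicate a .blank) =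
      some (replicate (m + 1) .blank ++ (replicate a .blank ++ [.l, .blank])) := by
    simp [ctlIter, ctlStep, rc, replicate_succ]
    rw [← append_assoc, replicate_append_replicate]
  rw [ctlIter_add, ctlIter_add, ctlIter_rc_replicate_blank, Option.bind_some, hLl,
    Option.bind_some, ctlIter_rc_replicate_blank]
  simp [replicate_succ]

end Stmt18

open Stmt18 in
theorem stmt18_general {α : Type*} (n : ℕ)
    (s : List (α × Ctl)) (hlen : s.length = n)
    (i : ℕ) (hi0 : 0 < i) (hin : i < n - 1)
    (hctl : ∀ j < n, (s.map Prod.snd)[j]? =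
      some (if j = i then Ctl.L else Ctl.blank)) :
    ∃ s', iterL rc (n - 1) s = some s' ∧
      (s'.map Prod.snd).count Ctl.l = 1 ∧
      ∀ c ∈ s'.map Prod.snd, c = Ctl.blank ∨ c = Ctl.l := by
  obtain ⟨a, rfl⟩ : ∃ a, i = a + 1 := ⟨i - 1, by omega⟩
  obtain ⟨m, hm⟩ : ∃ m, n - (a + 1) - 1 = m + 1 := ⟨n - a - 3, by omega⟩
  have hshape : s.map Prod.snd = .replicate (a + 1) .blank ++ .L :: .replicate (m + 1) .blank := by
    simpa [hlen, hm] using List.eq_replicate_append_cons_replicate (s.map Prod.snd) .L .blank (a + 1)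
      (by simp; omega) (by simpa [hlen] using hctl)
  have hrun := iterL_map_snd rc (a + 2 + m) s
  rw [hshape, ctlIter_rc_single_L] at hrun
  rw [show n - 1 = a + 2 + m by omega]
  obtain ⟨s', hs', hsnd⟩ := Option.map_eq_some_iff.mp hrun
  refine ⟨s', hs', ?_, ?_⟩ <;> rw [hsnd]
  · simp [List.count_replicate]
  · intro c hc
    simp only [List.mem_append, List.mem_replicate, List.mem_cons] at hc
    tauto

open Stmt18 in
/-- For the Lag system `R_left`: for any string of length `n ≥ 3` over
`Σ × {blank, L, l}` containing exactly one pair with control symbol `L`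
(at position `i`, not first and not last) and all other control symbols blank,
the first `n−1` iterations are all defined, and after them the string contains
exactly one non-blank control symbol, which is `l`. -/
theorem stmt18 {α : Type*} (n : ℕ) (hn : 3 ≤ n)
    (s : List (α × Ctl)) (hlen : s.length = n)
    (i : ℕ) (hi0 : 0 < i) (hin : i < n - 1)
    (hctl : ∀ j < n, (s.map Prod.snd)[j]? =
      some (if j = i then Ctl.L else Ctl.blank)) :
    ∃ s', iterL rc (n - 1) s = some s' ∧
      (s'.map Prod.snd).count Ctl.l = 1 ∧
      ∀ c ∈ s'.map Prod.snd, c = Ctl.blank ∨ c = Ctl.l :=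
  stmt18_general n s hlen i hi0 hin hctl
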